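/- arXiv:2406.19252 — 2 statements merged into one kernel-verified Lean document; each statement's English description precedes it below -/
import Mathlib

section
/- Let n ≥ 1 and let E ⊆ 𝔻ⁿ be a discrete set that is separated and well-approximated, and suppose the Hausdorff dimension of the radial limit set L_rad(E) equals the upper box dimension of the limit set L(E). Then dim_H L(E) = dim_B L(E) = δ(E); that is, the Hausdorff dimension of L(E), the (existing) box dimension of L(E), and the critical exponent δ(E) all coincide. -/
open Metric Set Filter
open scoped ENNReal NNReal

noncomputable section

/-- Points of `ℝⁿ` (Euclidean space). -/
abbrev Pt (n : ℕ) := EuclideanSpace ℝ (Fin n)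

/-- `E` is a discrete set: every point of `E` is isolated in `E`. -/
def IsDiscreteSet {n : ℕ} (E : Set (Pt n)) : Prop :=
  ∀ x ∈ E, ∃ r > 0, closedBall x r ∩ E = {x}

/-- The limit set `L(E) = cl(E) \ E`. -/
def limitSet {n : ℕ} (E : Set (Pt n)) : Set (Pt n) := closure E \ E

/-- `E ⊆ 𝔻ⁿ` is separated. -/
def SeparatedSet {n : ℕ} (E : Set (Pt n)) : Prop :=
  ∃ c₁ : ℝ, 0 < c₁ ∧ c₁ < 1 ∧ ∀ x ∈ E, closedBall x (c₁ * (1 - ‖x‖)) ∩ E = {x}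

/-- `E ⊆ 𝔻ⁿ` is well-approximated. -/
def WellApproximated {n : ℕ} (E : Set (Pt n)) : Prop :=
  ∃ c₂ : ℝ, 1 ≤ c₂ ∧ ∀ x ∈ E, ∃ z ∈ limitSet E, dist x z ≤ c₂ * (1 - ‖x‖)

/-- `E` is `α`-separated. -/
def AlphaSeparated {n : ℕ} (E : Set (Pt n)) (α : ℝ) : Prop :=
  ∃ c₁ : ℝ, 0 < c₁ ∧ ∀ x ∈ E, closedBall x (c₁ * (1 - ‖x‖) ^ α) ∩ E = {x}

/-- `E` is `β`-well-approximated. -/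
def BetaWellApproximated {n : ℕ} (E : Set (Pt n)) (β : ℝ) : Prop :=
  ∃ c₂ : ℝ, 1 ≤ c₂ ∧ ∀ x ∈ E, ∃ z ∈ limitSet E, dist x z ≤ c₂ * (1 - ‖x‖) ^ β

/-- The accumulation series `S_E(s) = ∑_{x ∈ E} (1 - |x|)^s` (valued in `ℝ≥0∞`). -/
def accSeries {n : ℕ} (E : Set (Pt n)) (s : ℝ) : ℝ≥0∞ :=
  ∑' x : E, ENNReal.ofReal ((1 - ‖(x : Pt n)‖) ^ s)

/-- The critical exponent `δ(E) = inf { s ≥ 0 : S_E(s) < ∞ }`, with `inf ∅ = ∞`. -/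
def critExp {n : ℕ} (E : Set (Pt n)) : ℝ≥0∞ :=
  ⨅ (s : ℝ≥0) (_ : accSeries E (s : ℝ) < ⊤), (s : ℝ≥0∞)

/-- The set of `c`-radial limit points of `E`. -/
def radialPoints {n : ℕ} (E : Set (Pt n)) (c : ℝ) : Set (Pt n) :=
  {z | ‖z‖ = 1 ∧ ∀ r > 0, ∃ x ∈ E,
    dist x z ≤ c * (1 - ‖x‖) ∧ c * (1 - ‖x‖) ≤ c * r}

/-- The radial limit set `L_rad(E) = ⋃_{c ≥ 1} L_c(E)`. -/
def radialLimitSet {n : ℕ} (E : Set (Pt n)) : Set (Pt n) :=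
  ⋃ c ∈ Ici (1 : ℝ), radialPoints E c

/-- The set of `(γ, c)`-radial limit points of `E`. -/
def gammaRadialPoints {n : ℕ} (E : Set (Pt n)) (γ c : ℝ) : Set (Pt n) :=
  {z | z ∈ limitSet E ∧ ∀ r > 0, ∃ x ∈ E,
    dist x z ≤ c * (1 - ‖x‖) ^ γ ∧ c * (1 - ‖x‖) ^ γ ≤ c * r ^ γ}

/-- The `γ`-radial limit set `L_rad^γ(E) = ⋃_{c ≥ 1} L_c^γ(E)`. -/
def gammaRadialLimitSet {n : ℕ} (E : Set (Pt n)) (γ : ℝ) : Set (Pt n) :=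
  ⋃ c ∈ Ici (1 : ℝ), gammaRadialPoints E γ c

/-- The packing number `N_δ(F)`: the maximal cardinality of a packing of `F` by
pairwise disjoint closed balls of radius `δ` centred in `F`. -/
def packingNumber {n : ℕ} (F : Set (Pt n)) (δ : ℝ) : ℕ∞ :=
  ⨆ (Z : Finset (Pt n)) (_ : ↑Z ⊆ F)
    (_ : (Z : Set (Pt n)).PairwiseDisjoint fun x => closedBall x δ), (Z.card : ℕ∞)

/-- The upper box dimension `limsup_{δ → 0⁺} log N_δ(F) / (-log δ)`. -/
def upperBoxDim {n : ℕ} (F : Set (Pt n)) : ℝ≥0∞ :=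
  limsup (fun δ : ℝ =>
    ENNReal.ofReal (Real.log ((packingNumber F δ).toNat : ℝ) / (-Real.log δ)))
    (nhdsWithin 0 (Ioi 0))

/-- The lower box dimension `liminf_{δ → 0⁺} log N_δ(F) / (-log δ)`. -/
def lowerBoxDim {n : ℕ} (F : Set (Pt n)) : ℝ≥0∞ :=
  liminf (fun δ : ℝ =>
    ENNReal.ofReal (Real.log ((packingNumber F δ).toNat : ℝ) / (-Real.log δ)))
    (nhdsWithin 0 (Ioi 0))

/-!
The limit set is squeezed between two chains of inequalities which the hypothesis
`dim_H L_rad(E) = dim_B⁺ L(E)` closes up.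

First, `dim_H L_rad ≤ dim_H L ≤ dim_B⁻ L ≤ dim_B⁺ L`: a maximal `2δ`-separated subset of `L` is a
cover of `L` by at most `N_δ(L)` balls of radius `2δ`, which bounds Hausdorff measures by packing
numbers along a sequence of scales.

Second, `dim_H L_rad ≤ δ(E) ≤ dim_B⁺ L`. A radial limit point lies in balls `B(x, c(1 - |x|))`,
`x ∈ E`, of arbitrarily small radius, so if `S_E(s) < ∞` the tails of the series are covers of
`L_rad` of vanishing `s`-dimensional cost (a Hausdorff–Cantelli argument). Conversely, when `E` is
separated and well-approximated, every point of `E` in the shell `r/2 < 1 - |x| ≤ r` lies close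
to one of the `N_r(L)` centres of a maximal packing of `L`, and only boundedly many such points
fit near each centre; hence the shell contributes `≲ N_r(L) r^s` to `S_E(s)`, and summing over
dyadic shells gives `S_E(s) < ∞` for every `s > dim_B⁺ L`.
-/

open MeasureTheory
open scoped Topology

theorem ENNReal.le_of_forall_nnreal_lt_lt {a b : ℝ≥0∞}
    (h : ∀ t s : ℝ≥0, b < t → t < s → a ≤ s) : a ≤ b := by
  by_contra! hba
  obtain ⟨t, hbt, hta⟩ := ENNReal.lt_iff_exists_nnreal_btwn.1 hba
  obtain ⟨s, hts, hsa⟩ := ENNReal.lt_iff_exists_nnreal_btwn.1 hta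
  exact (h t s hbt (by exact_mod_cast hts)).not_gt hsa

theorem ENNReal.tsum_subtype_le_of_forall_finset_card_le {α : Type*} {A : Set α} {f : α → ℝ≥0∞}
    {K b : ℝ≥0∞} (hf : ∀ x ∈ A, f x ≤ b)
    (hK : ∀ T : Finset α, ↑T ⊆ A → (T.card : ℝ≥0∞) ≤ K) : ∑' x : A, f x ≤ K * b :=
  ENNReal.summable.tsum_le_of_sum_le fun T => calc
    ∑ x ∈ T, f x ≤ T.card * b := by simpa using Finset.sum_le_card_nsmul T _ b fun x _ => hf x x.2
    _ ≤ K * b := by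
        gcongr
        simpa using hK (T.map (Function.Embedding.subtype _)) fun x hx => by
          obtain ⟨y, -, rfl⟩ := Finset.mem_map.1 hx
          exact y.2

theorem tendsto_tsum_setOf_le_nhdsGT_zero {ι : Type*} {f : ι → ℝ≥0∞} (hf : ∑' i, f i ≠ ⊤)
    {ρ : ι → ℝ} (hρ : ∀ i, 0 < ρ i) :
    Tendsto (fun r => ∑' i : {i | ρ i ≤ r}, f i) (𝓝[>] 0) (𝓝 0) := by
  refine ENNReal.tendsto_nhds_zero.2 fun ε hε => ?_
  obtain ⟨F, hF⟩ :=
    (ENNReal.tendsto_nhds_zero.1 (ENNReal.tendsto_tsum_compl_atTop_zero hf) ε hε).exists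
  have hsmall : ∀ᶠ r in 𝓝[>] (0 : ℝ), ∀ i ∈ F, r < ρ i :=
    (eventually_all_finset F).2 fun i _ => nhdsWithin_le_nhds (eventually_lt_nhds (hρ i))
  filter_upwards [hsmall] with r hr
  exact (ENNReal.tsum_mono_subtype f fun i hi hiF => (hr i hiF).not_ge hi).trans hF

theorem le_rpow_neg_of_ofReal_log_div_lt {N : ℕ} {δ : ℝ} {t : ℝ≥0} (hδ₀ : 0 < δ) (hδ₁ : δ < 1)
    (h : ENNReal.ofReal (Real.log N / -Real.log δ) < t) : (N : ℝ) ≤ δ ^ (-(t : ℝ)) := by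
  have hlog : 0 < -Real.log δ := neg_pos.2 (Real.log_neg hδ₀ hδ₁)
  rw [← ENNReal.ofReal_coe_nnreal, ENNReal.ofReal_lt_ofReal_iff'] at h
  have hN : Real.log N < t * -Real.log δ := (div_lt_iff₀ hlog).1 h.1
  rcases N.eq_zero_or_pos with rfl | hpos
  · simpa using Real.rpow_nonneg hδ₀.le _
  · rw [← Real.exp_log (Nat.cast_pos.2 hpos), Real.rpow_def_of_pos hδ₀]
    exact Real.exp_le_exp.2 (by nlinarith)

section MetricSpace

variable {X : Type*} [PseudoMetricSpace X]

theorem ediam_closedBall_le_ofReal (x : X) (r : ℝ) :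
    ediam (closedBall x r) ≤ ENNReal.ofReal (2 * r) := by
  rcases lt_or_ge r 0 with hr | hr
  · simp [closedBall_eq_empty.2 hr]
  · rw [← closedEBall_ofReal hr, ENNReal.ofReal_mul zero_le_two, ENNReal.ofReal_ofNat]
    exact ediam_closedEBall_le

theorem ediam_closedBall_rpow_le (x : X) {r s : ℝ} (hr : 0 ≤ r) (hs : 0 ≤ s) :
    ediam (closedBall x r) ^ s ≤ ENNReal.ofReal ((2 * r) ^ s) :=
  (ENNReal.rpow_le_rpow (ediam_closedBall_le_ofReal x r) hs).trans_eq
    (ENNReal.ofReal_rpow_of_nonneg (by positivity) hs)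

theorem sum_ediam_closedBall_rpow_le {Z : Finset X} {δ : ℝ} {t s : ℝ≥0} (hδ : 0 < δ)
    (hZ : (Z.card : ℝ) ≤ δ ^ (-(t : ℝ))) :
    ∑ z ∈ Z, ediam (closedBall z (2 * δ)) ^ (s : ℝ) ≤
      ENNReal.ofReal (4 ^ (s : ℝ) * δ ^ (s - t : ℝ)) :=
  calc ∑ z ∈ Z, ediam (closedBall z (2 * δ)) ^ (s : ℝ)
      ≤ ∑ _z ∈ Z, ENNReal.ofReal ((2 * (2 * δ)) ^ (s : ℝ)) :=
        Finset.sum_le_sum fun z _ => ediam_closedBall_rpow_le _ (by positivity) s.coe_nonneg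
    _ = ENNReal.ofReal (Z.card * (4 * δ) ^ (s : ℝ)) := by
        rw [Finset.sum_const, nsmul_eq_mul, ENNReal.ofReal_mul (Nat.cast_nonneg _),
          ENNReal.ofReal_natCast]
        ring_nf
    _ ≤ ENNReal.ofReal (δ ^ (-(t : ℝ)) * (4 * δ) ^ (s : ℝ)) := by gcongr
    _ = ENNReal.ofReal (4 ^ (s : ℝ) * δ ^ (s - t : ℝ)) := by
        rw [Real.mul_rpow zero_le_four hδ.le, Real.rpow_sub hδ, Real.rpow_neg hδ.le]
        ring_nf

theorem lt_dist_of_closedBall_inter_eq_singleton {E : Set X} {x y : X} {r : ℝ}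
    (h : closedBall x r ∩ E = {x}) (hy : y ∈ E) (hxy : x ≠ y) : r < dist x y := by
  by_contra! hle
  have hy' : y ∈ closedBall x r ∩ E := ⟨mem_closedBall'.2 hle, hy⟩
  rw [h] at hy'
  exact hxy hy'.symm

theorem Bornology.IsBounded.totallyBounded [ProperSpace X] {s : Set X} (hs : IsBounded s) :
    TotallyBounded s :=
  hs.isCompact_closure.totallyBounded.subset subset_closure

end MetricSpace

theorem Metric.packingNumber_ne_top_of_totallyBounded {X : Type*} [PseudoEMetricSpace X]
    {ε : ℝ≥0} {A : Set X} (hε : ε ≠ 0) (hA : TotallyBounded A) :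
    Metric.packingNumber ε A ≠ ⊤ := by
  obtain ⟨C, -, hCfin, hC⟩ := exists_finite_isCover_of_totallyBounded (ε := ε / 2)
    (by simpa using hε) hA
  refine ne_top_of_le_ne_top hCfin.encard_lt_top.ne ?_
  calc Metric.packingNumber ε A = Metric.packingNumber (2 * (ε / 2)) A := by
        rw [mul_div_cancel₀ _ two_ne_zero]
    _ ≤ externalCoveringNumber (ε / 2) A := packingNumber_two_mul_le_externalCoveringNumber _ _
    _ ≤ C.encard := hC.externalCoveringNumber_le_encard

theorem card_le_of_pairwise_le_dist {V : Type*} [NormedAddCommGroup V] [NormedSpace ℝ V]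
    [FiniteDimensional ℝ V] {s : Finset V} {w : V} {C ρ : ℝ} (hC : 0 ≤ C) (hρ : 0 < ρ)
    (hs : ∀ x ∈ s, dist x w ≤ C * ρ) (hsep : (s : Set V).Pairwise fun x y => ρ ≤ dist x y) :
    (s.card : ℝ) ≤ (2 * C + 1) ^ Module.finrank ℝ V := by
  borelize V
  set μ : Measure V := Measure.addHaar
  set d := Module.finrank ℝ V with hd
  have hdisj : (s : Set V).PairwiseDisjoint fun x => ball x (ρ / 2) := fun x hx y hy hxy =>
    ball_disjoint_ball (by linarith [hsep hx hy hxy])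
  have hsub : ⋃ x ∈ s, ball x (ρ / 2) ⊆ ball w ((C + 1 / 2) * ρ) :=
    iUnion₂_subset fun x hx => ball_subset_ball' (by linarith [hs x hx])
  have hvol : (s.card : ℝ≥0∞) * ENNReal.ofReal ((ρ / 2) ^ d) * μ (ball 0 1)
      ≤ ENNReal.ofReal (((C + 1 / 2) * ρ) ^ d) * μ (ball 0 1) :=
    calc (s.card : ℝ≥0∞) * ENNReal.ofReal ((ρ / 2) ^ d) * μ (ball 0 1)
        = μ (⋃ x ∈ s, ball x (ρ / 2)) := by
          rw [measure_biUnion_finset hdisj fun _ _ => measurableSet_ball]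
          simp only [μ.addHaar_ball_of_pos _ (half_pos hρ), Finset.sum_const, nsmul_eq_mul,
            mul_assoc, hd]
      _ ≤ μ (ball w ((C + 1 / 2) * ρ)) := measure_mono hsub
      _ = _ := μ.addHaar_ball_of_pos _ (by positivity)
  have hvol' := (ENNReal.mul_le_mul_iff_left (measure_ball_pos μ 0 zero_lt_one).ne'
    measure_ball_lt_top.ne).1 hvol
  rw [← ENNReal.ofReal_natCast, ← ENNReal.ofReal_mul (Nat.cast_nonneg _),
    ENNReal.ofReal_le_ofReal_iff (by positivity),
    show ((C + 1 / 2) * ρ) ^ d = (2 * C + 1) ^ d * (ρ / 2) ^ d by rw [← mul_pow]; ring] at hvol'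
  exact le_of_mul_le_mul_right hvol' (by positivity)

theorem hausdorffMeasure_setOf_forall_exists_closedBall_eq_zero {X ι : Type*} [MetricSpace X]
    [MeasurableSpace X] [BorelSpace X] {a : ι → X} {ρ : ι → ℝ} (hρ : ∀ i, 0 < ρ i) {c : ℝ}
    (hc : 0 ≤ c) {s : ℝ} (hs : 0 ≤ s) (hsum : ∑' i, ENNReal.ofReal (ρ i ^ s) ≠ ⊤) :
    μH[s] {z | ∀ r > 0, ∃ i, ρ i ≤ r ∧ z ∈ closedBall (a i) (c * ρ i)} = 0 := by
  have : Countable ι := countable_univ_iff.1 <| by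
    have hsupp : Function.support (fun i => ENNReal.ofReal (ρ i ^ s)) = univ :=
      eq_univ_of_forall fun i => by simpa using Real.rpow_pos_of_pos (hρ i) s
    exact hsupp ▸ Summable.countable_support_ennreal hsum
  set S := {z | ∀ r > 0, ∃ i, ρ i ≤ r ∧ z ∈ closedBall (a i) (c * ρ i)}
  set K := ENNReal.ofReal ((2 * c) ^ s)
  have hterm (r : ℝ) (i : {i | ρ i ≤ r}) :
      ediam (closedBall (a i) (c * ρ i)) ^ s ≤ K * ENNReal.ofReal (ρ i ^ s) := by
    rw [← ENNReal.ofReal_mul (by positivity), ← Real.mul_rpow (by positivity) (hρ i).le, mul_assoc]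
    exact ediam_closedBall_rpow_le _ (mul_nonneg hc (hρ i).le) hs
  have hdiam (r : ℝ) (i : {i | ρ i ≤ r}) :
      ediam (closedBall (a i) (c * ρ i)) ≤ ENNReal.ofReal (2 * c * r) :=
    (ediam_closedBall_le_ofReal _ _).trans (ENNReal.ofReal_le_ofReal (by
      have : ρ i ≤ r := i.2
      nlinarith))
  have hcover : ∀ᶠ r in 𝓝[>] (0 : ℝ), S ⊆ ⋃ i : {i | ρ i ≤ r}, closedBall (a i) (c * ρ i) :=
    eventually_mem_nhdsWithin.mono fun r hr z hz => by
      obtain ⟨i, hir, hzi⟩ := hz r hr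
      exact mem_iUnion.2 ⟨⟨i, hir⟩, hzi⟩
  have hr : Tendsto (fun r => ENNReal.ofReal (2 * c * r)) (𝓝[>] 0) (𝓝 0) := by
    simpa using (ENNReal.tendsto_ofReal ((tendsto_id (x := 𝓝 (0 : ℝ))).const_mul (2 * c))).mono_left
      nhdsWithin_le_nhds
  have htail := ENNReal.Tendsto.const_mul (tendsto_tsum_setOf_le_nhdsGT_zero hsum hρ)
    (Or.inr ENNReal.ofReal_ne_top) (a := K)
  refine le_antisymm ?_ zero_le
  calc μH[s] S ≤ liminf (fun r => ∑' i : {i | ρ i ≤ r}, ediam (closedBall (a i) (c * ρ i)) ^ s)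
        (𝓝[>] 0) :=
        Measure.hausdorffMeasure_le_liminf_tsum (ι := fun r => {i | ρ i ≤ r}) s _ _ hr
          (fun r i => closedBall (a i) (c * ρ i)) (Eventually.of_forall hdiam) hcover
    _ ≤ liminf (fun r => K * ∑' i : {i | ρ i ≤ r}, ENNReal.ofReal (ρ i ^ s)) (𝓝[>] 0) :=
        liminf_le_liminf (Eventually.of_forall fun r => by
          rw [← ENNReal.tsum_mul_left]
          exact ENNReal.tsum_le_tsum (hterm r))
    _ = 0 := by simpa using htail.liminf_eq

section Packing

variable {n : ℕ}

theorem packingNumber_anti (F : Set (Pt n)) {δ δ' : ℝ} (h : δ ≤ δ') :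
    packingNumber F δ' ≤ packingNumber F δ :=
  iSup₂_mono fun _ _ => iSup_le fun hdisj =>
    le_iSup_of_le (hdisj.mono fun _ => closedBall_subset_closedBall h) le_rfl

theorem packingNumber_le_metricPackingNumber (F : Set (Pt n)) {δ : ℝ} (hδ : 0 ≤ δ) :
    packingNumber F δ ≤ Metric.packingNumber δ.toNNReal F := by
  refine iSup₂_le fun Z hZF => iSup_le fun hdisj => ?_
  have hsep : IsSeparated (δ.toNNReal : ℝ≥0∞) (Z : Set (Pt n)) := fun x hx y hy hxy => by
    show ENNReal.ofReal δ < edist x y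
    rw [edist_dist, ENNReal.ofReal_lt_ofReal_iff_of_nonneg hδ]
    by_contra! h
    exact Set.not_disjoint_iff.2 ⟨y, mem_closedBall.2 (by rwa [dist_comm]),
      mem_closedBall_self hδ⟩ (hdisj hx hy hxy)
  rw [← Set.encard_coe_eq_coe_finsetCard]
  exact hsep.encard_le_packingNumber hZF

theorem packingNumber_ne_top {F : Set (Pt n)} (hF : Bornology.IsBounded F) {δ : ℝ}
    (hδ : 0 < δ) : packingNumber F δ ≠ ⊤ :=
  ne_top_of_le_ne_top
    (Metric.packingNumber_ne_top_of_totallyBounded (by simpa using hδ) hF.totallyBounded)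
    (packingNumber_le_metricPackingNumber F hδ.le)

theorem exists_finset_cover_card_le_packingNumber {F : Set (Pt n)}
    (hF : Bornology.IsBounded F) {δ : ℝ} (hδ : 0 < δ) :
    ∃ Z : Finset (Pt n), Z.card ≤ (packingNumber F δ).toNat ∧
      F ⊆ ⋃ z ∈ Z, closedBall z (2 * δ) := by
  set ε : ℝ≥0 := (2 * δ).toNNReal
  have hε : (ε : ℝ) = 2 * δ := Real.coe_toNNReal _ (by positivity)
  have hfin : Metric.packingNumber ε F ≠ ⊤ :=
    Metric.packingNumber_ne_top_of_totallyBounded (by simpa [ε] using hδ) hF.totallyBounded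
  have hZfin : (maximalSeparatedSet ε F).Finite :=
    Set.encard_ne_top_iff.1 (by rwa [encard_maximalSeparatedSet hfin])
  refine ⟨hZfin.toFinset, ?_, ?_⟩
  · have hdisj : (hZfin.toFinset : Set (Pt n)).PairwiseDisjoint fun x => closedBall x δ := by
      intro x hx y hy hxy
      have : (ε : ℝ≥0∞) < edist x y :=
        isSeparated_maximalSeparatedSet (by simpa using hx) (by simpa using hy) hxy
      rw [edist_dist, ← ENNReal.ofReal_coe_nnreal, hε,
        ENNReal.ofReal_lt_ofReal_iff_of_nonneg (by positivity)] at this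
      exact closedBall_disjoint_closedBall (by linarith)
    have hcard : (hZfin.toFinset.card : ℕ∞) ≤ packingNumber F δ :=
      le_iSup₂_of_le hZfin.toFinset (by simpa using maximalSeparatedSet_subset)
        (le_iSup_of_le hdisj le_rfl)
    simpa using ENat.toNat_le_toNat hcard (packingNumber_ne_top hF hδ)
  · simpa [hε] using (isCover_maximalSeparatedSet hfin).subset_iUnion_closedBall

end Packing

section BoxDimension

variable {n : ℕ} {F : Set (Pt n)}

theorem exists_packingNumber_le_rpow (hF : Bornology.IsBounded F) {t : ℝ≥0}
    (ht : upperBoxDim F < t) :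
    ∃ B : ℝ, ∀ δ, 0 < δ → δ ≤ 1 → ((packingNumber F δ).toNat : ℝ) ≤ B * δ ^ (-(t : ℝ)) := by
  have hev := (eventually_lt_of_limsup_lt ht).and (Ioo_mem_nhdsGT one_pos)
  obtain ⟨u, hu, hsub⟩ := mem_nhdsGT_iff_exists_Ioc_subset.1 hev
  set N := (packingNumber F u).toNat
  refine ⟨max 1 (N : ℝ), fun δ hδ hδ₁ => ?_⟩
  have hpow : 1 ≤ δ ^ (-(t : ℝ)) :=
    Real.one_le_rpow_of_pos_of_le_one_of_nonpos hδ hδ₁ (neg_nonpos.2 t.coe_nonneg)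
  rcases le_or_gt δ u with hδu | huδ
  · obtain ⟨hratio, -, hδ₁'⟩ := hsub ⟨hδ, hδu⟩
    calc ((packingNumber F δ).toNat : ℝ) ≤ δ ^ (-(t : ℝ)) :=
          le_rpow_neg_of_ofReal_log_div_lt hδ hδ₁' hratio
      _ ≤ max 1 (N : ℝ) * δ ^ (-(t : ℝ)) :=
          le_mul_of_one_le_left (by positivity) (le_max_left _ _)
  · calc ((packingNumber F δ).toNat : ℝ) ≤ N := by
          exact_mod_cast ENat.toNat_le_toNat (packingNumber_anti F huδ.le)
            (packingNumber_ne_top hF hu)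
      _ ≤ max 1 (N : ℝ) * δ ^ (-(t : ℝ)) := by
          nlinarith [le_max_right (1 : ℝ) N, le_max_left (1 : ℝ) N]

theorem hausdorffMeasure_eq_zero_of_lowerBoxDim_lt (hF : Bornology.IsBounded F) {t s : ℝ≥0}
    (ht : lowerBoxDim F < t) (hts : t < s) : μH[s] F = 0 := by
  set good := {δ : ℝ | 0 < δ ∧ ((packingNumber F δ).toNat : ℝ) ≤ δ ^ (-(t : ℝ))}
  set l := 𝓝[>] (0 : ℝ) ⊓ 𝓟 good
  have : l.NeBot := frequently_mem_iff_neBot.1 <|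
    ((frequently_lt_of_liminf_lt (h := ht)).and_eventually (Ioo_mem_nhdsGT one_pos)).mono
      fun δ ⟨hratio, hδ⟩ => ⟨hδ.1, le_rpow_neg_of_ofReal_log_div_lt hδ.1 hδ.2 hratio⟩
  have hl : l ≤ 𝓝 0 := inf_le_left.trans nhdsWithin_le_nhds
  have hgood : ∀ᶠ δ in l, δ ∈ good := mem_inf_of_right (mem_principal_self good)
  -- stated as an implication so that `choose` yields a finset for every real `δ`
  have hnet (δ : ℝ) : ∃ Z : Finset (Pt n), 0 < δ →
      Z.card ≤ (packingNumber F δ).toNat ∧ F ⊆ ⋃ z ∈ Z, closedBall z (2 * δ) := by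
    by_cases hδ : 0 < δ
    · obtain ⟨Z, hZ⟩ := exists_finset_cover_card_le_packingNumber hF hδ
      exact ⟨Z, fun _ => hZ⟩
    · exact ⟨∅, fun h => absurd h hδ⟩
  choose Z hZ using hnet
  have hst : 0 < (s - t : ℝ) := sub_pos.2 hts
  have hlim : Tendsto (fun δ : ℝ => ENNReal.ofReal (4 ^ (s : ℝ) * δ ^ (s - t : ℝ))) l (𝓝 0) := by
    have h := ((Real.continuousAt_rpow_const 0 _ (Or.inr hst.le)).tendsto.const_mul
      (4 ^ (s : ℝ))).mono_left hl
    simpa [Real.zero_rpow hst.ne'] using ENNReal.tendsto_ofReal h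
  refine le_antisymm ?_ zero_le
  calc μH[s] F ≤ liminf (fun δ => ∑ z : Z δ, ediam (closedBall (z : Pt n) (2 * δ)) ^ (s : ℝ)) l :=
        Measure.hausdorffMeasure_le_liminf_sum (ι := fun δ => Z δ) _ F
          (fun δ => ENNReal.ofReal (4 * δ))
          (by simpa using (ENNReal.tendsto_ofReal (tendsto_id.const_mul 4)).mono_left hl)
          (fun δ z => closedBall (z : Pt n) (2 * δ))
          (Eventually.of_forall fun δ z => (ediam_closedBall_le_ofReal _ _).trans_eq (by ring_nf))
          (hgood.mono fun δ hδ => by rw [iUnion_subtype]; exact (hZ δ hδ.1).2)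
    _ ≤ liminf (fun δ : ℝ => ENNReal.ofReal (4 ^ (s : ℝ) * δ ^ (s - t : ℝ))) l :=
        liminf_le_liminf <| hgood.mono fun δ ⟨hδ, hN⟩ => by
          rw [Finset.sum_coe_sort (Z δ) fun z => ediam (closedBall z (2 * δ)) ^ (s : ℝ)]
          exact sum_ediam_closedBall_rpow_le hδ ((Nat.cast_le.2 (hZ δ hδ).1).trans hN)
    _ = 0 := hlim.liminf_eq

theorem dimH_le_lowerBoxDim (hF : Bornology.IsBounded F) : dimH F ≤ lowerBoxDim F :=
  ENNReal.le_of_forall_nnreal_lt_lt fun _ _ ht hts => dimH_le_of_hausdorffMeasure_ne_top <| by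
    rw [hausdorffMeasure_eq_zero_of_lowerBoxDim_lt hF ht hts]
    exact ENNReal.zero_ne_top

end BoxDimension

section RadialLimitSet

variable {n : ℕ} {E : Set (Pt n)}

theorem isBounded_limitSet (hE : E ⊆ ball 0 1) : Bornology.IsBounded (limitSet E) :=
  ((isBounded_ball.subset hE).closure).subset sdiff_subset

theorem radialLimitSet_subset_limitSet (hE : E ⊆ ball 0 1) : radialLimitSet E ⊆ limitSet E := by
  intro z hz
  obtain ⟨c, hc, hzc, hzE⟩ := mem_iUnion₂.1 hz
  have hc₀ : 0 < c := zero_lt_one.trans_le hc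
  refine ⟨Metric.mem_closure_iff.2 fun ε hε => ?_, fun hz => by
    simpa [hzc] using mem_ball_zero_iff.1 (hE hz)⟩
  obtain ⟨x, hx, hxz, hxr⟩ := hzE (ε / (2 * c)) (by positivity)
  refine ⟨x, hx, ?_⟩
  calc dist z x ≤ c * (ε / (2 * c)) := (dist_comm z x ▸ hxz).trans hxr
    _ < ε := by field_simp; linarith

theorem radialLimitSet_subset_iUnion (hE : E ⊆ ball 0 1) :
    radialLimitSet E ⊆ ⋃ m : ℕ, {z | ∀ r > 0, ∃ x : E,
      1 - ‖(x : Pt n)‖ ≤ r ∧ z ∈ closedBall (x : Pt n) (m * (1 - ‖(x : Pt n)‖))} := by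
  intro z hz
  obtain ⟨c, hc, -, hzE⟩ := mem_iUnion₂.1 hz
  have hc₀ : 0 < c := zero_lt_one.trans_le hc
  refine mem_iUnion.2 ⟨⌈c⌉₊, fun r hr => ?_⟩
  obtain ⟨x, hx, hxz, hxr⟩ := hzE r hr
  have hx₀ : 0 ≤ 1 - ‖x‖ := sub_nonneg.2 (mem_ball_zero_iff.1 (hE hx)).le
  refine ⟨⟨x, hx⟩, le_of_mul_le_mul_left hxr hc₀, mem_closedBall'.2 ?_⟩
  exact hxz.trans (mul_le_mul_of_nonneg_right (Nat.le_ceil c) hx₀)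

theorem hausdorffMeasure_radialLimitSet_eq_zero (hE : E ⊆ ball 0 1) {s : ℝ} (hs : 0 ≤ s)
    (h : accSeries E s ≠ ⊤) : μH[s] (radialLimitSet E) = 0 :=
  measure_mono_null (radialLimitSet_subset_iUnion hE) <| measure_iUnion_null fun m =>
    hausdorffMeasure_setOf_forall_exists_closedBall_eq_zero
      (fun x : E => sub_pos.2 (mem_ball_zero_iff.1 (hE x.2))) m.cast_nonneg hs h

theorem dimH_radialLimitSet_le_critExp (hE : E ⊆ ball 0 1) :
    dimH (radialLimitSet E) ≤ critExp E :=
  le_iInf₂ fun s hs => dimH_le_of_hausdorffMeasure_ne_top <| by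
    rw [hausdorffMeasure_radialLimitSet_eq_zero hE s.coe_nonneg hs.ne]
    exact ENNReal.zero_ne_top

end RadialLimitSet

section Shells

variable {n : ℕ} {E : Set (Pt n)}

def shell (E : Set (Pt n)) (r : ℝ) : Set (Pt n) := {x ∈ E | r / 2 < 1 - ‖x‖ ∧ 1 - ‖x‖ ≤ r}

theorem subset_iUnion_shell (hE : E ⊆ ball 0 1) : E ⊆ ⋃ k : ℕ, shell E (2⁻¹ ^ k) := by
  intro x hx
  have h₀ : 0 < 1 - ‖x‖ := sub_pos.2 (mem_ball_zero_iff.1 (hE hx))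
  obtain ⟨k, hk, hk'⟩ :=
    exists_nat_pow_near ((one_le_inv₀ h₀).2 (by linarith [norm_nonneg x])) one_lt_two
  refine mem_iUnion.2 ⟨k, hx, ?_, ?_⟩
  · rw [inv_pow, ← inv_pow, div_eq_mul_inv, ← pow_succ, inv_pow]
    exact (inv_lt_comm₀ h₀ (by positivity)).1 hk'
  · rw [inv_pow]
    exact (le_inv_comm₀ h₀ (by positivity)).2 hk

-- A shell point is within `(c₂ + 2) r` of a centre of a maximal packing of `L(E)` at scale `r`,
-- and the shell is `c₁ r / 2`-separated, so a volume count bounds the shell points near each centre.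
theorem card_le_of_subset_shell (hE : E ⊆ ball 0 1) {c₁ c₂ : ℝ} (hc₁ : 0 < c₁) (hc₂ : 0 ≤ c₂)
    (hsep : ∀ x ∈ E, ∀ y ∈ E, x ≠ y → c₁ * (1 - ‖x‖) < dist x y)
    (hwa : ∀ x ∈ E, ∃ z ∈ limitSet E, dist x z ≤ c₂ * (1 - ‖x‖)) {r : ℝ} (hr : 0 < r)
    {T : Finset (Pt n)} (hT : ↑T ⊆ shell E r) :
    (T.card : ℝ) ≤ (4 * (c₂ + 2) / c₁ + 1) ^ n * (packingNumber (limitSet E) r).toNat := by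
  obtain ⟨Z, hZcard, hZcov⟩ :=
    exists_finset_cover_card_le_packingNumber (isBounded_limitSet hE) hr
  set R := (c₂ + 2) * r with hR
  set D := (4 * (c₂ + 2) / c₁ + 1) ^ n
  have hnear : ∀ x ∈ T, ∃ p ∈ Z, dist x p ≤ R := by
    intro x hx
    obtain ⟨hxE, -, hxr⟩ := hT hx
    obtain ⟨z, hzL, hxz⟩ := hwa x hxE
    obtain ⟨p, hp, hzp⟩ := mem_iUnion₂.1 (hZcov hzL)
    refine ⟨p, hp, (dist_triangle x z p).trans ?_⟩
    nlinarith [mem_closedBall.1 hzp]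
  have hpiece (p : Pt n) : ((T.filter fun x => dist x p ≤ R).card : ℝ) ≤ D := by
    have h := card_le_of_pairwise_le_dist (s := T.filter fun x => dist x p ≤ R) (w := p)
      (C := 2 * (c₂ + 2) / c₁) (ρ := c₁ * r / 2) (by positivity) (by positivity) ?_ ?_
    · rw [finrank_euclideanSpace_fin] at h
      convert h using 3
      ring
    · intro x hx
      calc dist x p ≤ R := (Finset.mem_filter.1 hx).2
        _ = 2 * (c₂ + 2) / c₁ * (c₁ * r / 2) := by rw [hR]; field_simp
    · intro x hx y hy hxy
      obtain ⟨hxE, hxr, -⟩ := hT (Finset.mem_filter.1 hx).1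
      have := hsep x hxE y (hT (Finset.mem_filter.1 hy).1).1 hxy
      nlinarith
  have hcover : T ⊆ Z.biUnion fun p => T.filter fun x => dist x p ≤ R := fun x hx => by
    obtain ⟨p, hp, hxp⟩ := hnear x hx
    exact Finset.mem_biUnion.2 ⟨p, hp, Finset.mem_filter.2 ⟨hx, hxp⟩⟩
  calc (T.card : ℝ) ≤ ∑ p ∈ Z, ((T.filter fun x => dist x p ≤ R).card : ℝ) := by
        exact_mod_cast (Finset.card_le_card hcover).trans Finset.card_biUnion_le
    _ ≤ Z.card * D := by simpa using Finset.sum_le_card_nsmul Z _ _ fun p _ => hpiece p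
    _ ≤ D * (packingNumber (limitSet E) r).toNat := by
        rw [mul_comm]
        gcongr

end Shells

section CriticalExponent

variable {n : ℕ} {E : Set (Pt n)}

theorem accSeries_ne_top_of_upperBoxDim_lt (hE : E ⊆ ball 0 1) (hsep : SeparatedSet E)
    (hwa : WellApproximated E) {t s : ℝ≥0} (ht : upperBoxDim (limitSet E) < t) (hts : t < s) :
    accSeries E s ≠ ⊤ := by
  obtain ⟨c₁, hc₁, -, hc₁E⟩ := hsep
  obtain ⟨c₂, hc₂, hc₂E⟩ := hwa
  obtain ⟨B, hB⟩ := exists_packingNumber_le_rpow (isBounded_limitSet hE) ht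
  set D := (4 * (c₂ + 2) / c₁ + 1) ^ n
  have hD : 0 ≤ D := pow_nonneg (add_pos (div_pos (by linarith) hc₁) one_pos).le n
  set q : ℝ := 2⁻¹ ^ (s - t : ℝ)
  have hq : q < 1 := Real.rpow_lt_one (by norm_num) (by norm_num) (sub_pos.2 hts)
  set f : Pt n → ℝ≥0∞ := fun x => ENNReal.ofReal ((1 - ‖x‖) ^ (s : ℝ))
  have hshell (k : ℕ) :
      ∑' x : shell E (2⁻¹ ^ k), f x ≤ ENNReal.ofReal (D * B) * ENNReal.ofReal q ^ k := by
    set r : ℝ := 2⁻¹ ^ k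
    have hr : 0 < r := by positivity
    calc ∑' x : shell E r, f x
        ≤ ENNReal.ofReal (D * (packingNumber (limitSet E) r).toNat) *
            ENNReal.ofReal (r ^ (s : ℝ)) :=
          ENNReal.tsum_subtype_le_of_forall_finset_card_le
            (fun x hx => ENNReal.ofReal_le_ofReal
              (Real.rpow_le_rpow (by linarith [hx.2.1]) hx.2.2 s.coe_nonneg))
            (fun T hT => by
              rw [← ENNReal.ofReal_natCast]
              exact ENNReal.ofReal_le_ofReal (card_le_of_subset_shell hE hc₁ (by linarith)
                (fun x hx y hy hxy => lt_dist_of_closedBall_inter_eq_singleton (hc₁E x hx) hy hxy)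
                hc₂E hr hT))
      _ ≤ ENNReal.ofReal (D * (B * r ^ (-(t : ℝ)))) * ENNReal.ofReal (r ^ (s : ℝ)) := by
          gcongr
          exact hB r hr (pow_le_one₀ (by norm_num) (by norm_num))
      _ = ENNReal.ofReal (D * B) * ENNReal.ofReal q ^ k := by
          rw [← ENNReal.ofReal_pow (by positivity), ← ENNReal.ofReal_mul' (by positivity),
            ← ENNReal.ofReal_mul' (by positivity), mul_assoc, mul_assoc, ← Real.rpow_add hr,
            neg_add_eq_sub, Real.rpow_pow_comm (by norm_num), mul_assoc]
  refine ne_of_lt ?_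
  calc accSeries E s ≤ ∑' k : ℕ, ∑' x : shell E (2⁻¹ ^ k), f x :=
        (ENNReal.tsum_mono_subtype f (subset_iUnion_shell hE)).trans
          (ENNReal.tsum_iUnion_le_tsum f _)
    _ ≤ ∑' k : ℕ, ENNReal.ofReal (D * B) * ENNReal.ofReal q ^ k := ENNReal.tsum_le_tsum hshell
    _ = ENNReal.ofReal (D * B) * (1 - ENNReal.ofReal q)⁻¹ := by
        rw [ENNReal.tsum_mul_left, ENNReal.tsum_geometric]
    _ < ⊤ := ENNReal.mul_lt_top ENNReal.ofReal_lt_top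
        (ENNReal.inv_lt_top.2 (tsub_pos_of_lt (ENNReal.ofReal_lt_one.2 hq)))

theorem critExp_le_upperBoxDim (hE : E ⊆ ball 0 1) (hsep : SeparatedSet E)
    (hwa : WellApproximated E) : critExp E ≤ upperBoxDim (limitSet E) :=
  ENNReal.le_of_forall_nnreal_lt_lt fun _ s ht hts =>
    iInf₂_le s (accSeries_ne_top_of_upperBoxDim_lt hE hsep hwa ht hts).lt_top

end CriticalExponent

theorem dimH_eq_boxDim_eq_critExp_general {n : ℕ}
    (E : Set (Pt n)) (hE : E ⊆ ball 0 1)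
    (hsep : SeparatedSet E) (hwa : WellApproximated E)
    (hreg : dimH (radialLimitSet E) = upperBoxDim (limitSet E)) :
    dimH (limitSet E) = critExp E ∧
      lowerBoxDim (limitSet E) = critExp E ∧
      upperBoxDim (limitSet E) = critExp E := by
  have h₁ : upperBoxDim (limitSet E) ≤ dimH (limitSet E) :=
    hreg ▸ dimH_mono (radialLimitSet_subset_limitSet hE)
  have h₂ : dimH (limitSet E) ≤ lowerBoxDim (limitSet E) :=
    dimH_le_lowerBoxDim (isBounded_limitSet hE)
  have h₃ : lowerBoxDim (limitSet E) ≤ upperBoxDim (limitSet E) := liminf_le_limsup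
  have h₄ : upperBoxDim (limitSet E) ≤ critExp E := hreg ▸ dimH_radialLimitSet_le_critExp hE
  have h₅ : critExp E ≤ upperBoxDim (limitSet E) := critExp_le_upperBoxDim hE hsep hwa
  exact ⟨by order, by order, by order⟩

/-- **Corollary: if `dim_H L_rad(E) = upper box dim L(E)` then Hausdorff and box dimensions of
`L(E)` exist and equal the critical exponent `δ(E)`.** -/
theorem dimH_eq_boxDim_eq_critExp {n : ℕ} (hn : 1 ≤ n)
    (E : Set (Pt n)) (hE : E ⊆ ball 0 1)
    (hdisc : IsDiscreteSet E) (hsep : SeparatedSet E) (hwa : WellApproximated E)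
    (hreg : dimH (radialLimitSet E) = upperBoxDim (limitSet E)) :
    dimH (limitSet E) = critExp E ∧
      lowerBoxDim (limitSet E) = critExp E ∧
      upperBoxDim (limitSet E) = critExp E :=
  dimH_eq_boxDim_eq_critExp_general E hE hsep hwa hreg

end
end

section
/- Let n ≥ 1 and let X ⊆ S^{n-1} be non-empty and closed. Then there exists a discrete set E ⊆ 𝔻ⁿ which is separated and well-approximated, with L(E) = X and δ(E) = upper box dimension of X; moreover every separated and well-approximated discrete E ⊆ 𝔻ⁿ with L(E) = X satisfies δ(E) ≤ upper box dimension of X. Consequently, the upper box dimension of X equals the maximum of δ(E) over all separated and well-approximated discrete E ⊆ 𝔻ⁿ with L(E) = X. -/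
open Metric Set Filter
open scoped ENNReal NNReal

noncomputable section

/-! Both inequalities compare `E` with maximal packings of `X` at the dyadic scales `2⁻¹ ^ k`.

Upper bound: cut `E` into the shells `2⁻¹ ^ (k + 1) < 1 - ‖x‖ ≤ 2⁻¹ ^ k`. Separation makes a shell
`c₁ 2⁻¹ ^ (k + 1)`-separated and well-approximation puts each of its points within `O(2⁻¹ ^ k)` of a
maximal `2⁻¹ ^ k`-packing of `X`, so a volume count bounds the shell by a constant times
`N_{2⁻¹ ^ k}(X)`. Hence `S_E(t)` is dominated by `∑ₖ N_{2⁻¹ ^ k}(X) 2^(-k t)`, which converges for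
every `t` above the upper box dimension.

Lower bound: push a maximal `2⁻¹ ^ (k + 1)`-packing of `X` radially onto the sphere of radius
`1 - 2⁻¹ ^ (k + 1)`. The union over `k` is separated and well-approximated with limit set `X`, and
its accumulation series is exactly `∑ₖ N_{2⁻¹ ^ (k + 1)}(X) 2^(-(k + 1) s)`; convergence forces
`N_δ(X) = O(δ^(-s))`, i.e. the upper box dimension is at most `s`. -/

open Bornology Topology

section Balls

open MeasureTheory Module

variable {V : Type*} [NormedAddCommGroup V] [NormedSpace ℝ V]

theorem pairwiseDisjoint_closedBall_iff {s : Set V} {δ : ℝ} (hδ : 0 ≤ δ) :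
    (s.PairwiseDisjoint fun x => closedBall x δ) ↔ s.Pairwise fun x y => 2 * δ < dist x y := by
  simp only [Set.PairwiseDisjoint, Set.Pairwise, Function.onFun,
    disjoint_closedBall_closedBall_iff hδ hδ, two_mul]

theorem norm_one_sub_smul {z : V} (hz : ‖z‖ = 1) {r : ℝ} (hr : r ≤ 1) :
    ‖(1 - r) • z‖ = 1 - r := by
  rw [norm_smul, hz, mul_one, Real.norm_of_nonneg (by linarith)]

theorem dist_one_sub_smul_self {z : V} (hz : ‖z‖ = 1) {r : ℝ} (hr : 0 ≤ r) :
    dist ((1 - r) • z) z = r := by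
  rw [dist_eq_norm, sub_smul, one_smul, sub_sub_cancel_left, norm_neg, norm_smul, hz, mul_one,
    Real.norm_of_nonneg hr]

variable [FiniteDimensional ℝ V]

theorem Finset.card_le_of_pairwise_lt_dist {s : Finset V} {c : V} {R r : ℝ} (hr : 0 < r)
    (hR : 0 ≤ R) (hs : ↑s ⊆ closedBall c R) (hsep : (s : Set V).Pairwise fun x y => r < dist x y) :
    (s.card : ℝ) ≤ ((2 * R + r) / r) ^ finrank ℝ V := by
  borelize V
  let μ : Measure V := Measure.addHaar
  have hdisj : (s : Set V).PairwiseDisjoint fun x => closedBall x (r / 2) := fun x hx y hy hxy =>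
    closedBall_disjoint_closedBall (by linarith [hsep hx hy hxy])
  have hsub : (⋃ x ∈ s, closedBall x (r / 2)) ⊆ closedBall c (R + r / 2) :=
    iUnion₂_subset fun x hx =>
      closedBall_subset_closedBall' (by linarith [mem_closedBall.mp (hs hx)])
  have hvol : (s.card : ℝ≥0∞) * ENNReal.ofReal ((r / 2) ^ finrank ℝ V) * μ (ball 0 1)
      ≤ ENNReal.ofReal ((R + r / 2) ^ finrank ℝ V) * μ (ball 0 1) := by
    calc (s.card : ℝ≥0∞) * ENNReal.ofReal ((r / 2) ^ finrank ℝ V) * μ (ball 0 1)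
        = μ (⋃ x ∈ s, closedBall x (r / 2)) := by
          rw [measure_biUnion_finset hdisj fun _ _ => measurableSet_closedBall]
          simp only [μ.addHaar_closedBall _ (by positivity : 0 ≤ r / 2), Finset.sum_const,
            nsmul_eq_mul, mul_assoc]
      _ ≤ μ (closedBall c (R + r / 2)) := measure_mono hsub
      _ = _ := μ.addHaar_closedBall _ (by positivity)
  have hcard : (s.card : ℝ) * (r / 2) ^ finrank ℝ V ≤ (R + r / 2) ^ finrank ℝ V := by
    rw [ENNReal.mul_le_mul_iff_left (measure_ball_pos μ 0 one_pos).ne' measure_ball_lt_top.ne,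
      ← ENNReal.ofReal_natCast, ← ENNReal.ofReal_mul (by positivity)] at hvol
    exact (ENNReal.ofReal_le_ofReal_iff (by positivity)).mp hvol
  calc (s.card : ℝ) ≤ (R + r / 2) ^ finrank ℝ V / (r / 2) ^ finrank ℝ V :=
        (le_div_iff₀ (by positivity)).mpr hcard
    _ = ((2 * R + r) / r) ^ finrank ℝ V := by
        rw [← div_pow]
        congr 1
        field_simp

theorem Bornology.IsBounded.finite_of_pairwise_lt_dist {s : Set V} (hs : IsBounded s)
    {r : ℝ} (hr : 0 < r) (hsep : s.Pairwise fun x y => r < dist x y) : s.Finite := by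
  obtain ⟨R, hR0, hR⟩ := hs.subset_closedBall_lt 0 0
  by_contra hinf
  obtain ⟨t, hts, htcard⟩ := Set.Infinite.exists_subset_card_eq hinf
    (⌈((2 * R + r) / r) ^ finrank ℝ V⌉₊ + 1)
  have hcard := t.card_le_of_pairwise_lt_dist hr hR0.le (hts.trans hR) (hsep.mono hts)
  rw [htcard] at hcard
  push_cast at hcard
  linarith [Nat.le_ceil (((2 * R + r) / r) ^ finrank ℝ V)]

theorem Finset.card_le_card_mul_of_pairwise_lt_dist {s t : Finset V} {R r : ℝ} (hr : 0 < r)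
    (hR : 0 ≤ R) (hst : ∀ x ∈ s, ∃ z ∈ t, dist x z ≤ R)
    (hsep : (s : Set V).Pairwise fun x y => r < dist x y) :
    (s.card : ℝ) ≤ t.card * ((2 * R + r) / r) ^ finrank ℝ V := by
  classical
  have hcover : s ⊆ t.biUnion fun z => s.filter fun x => dist x z ≤ R := fun x hx => by
    obtain ⟨z, hz, hxz⟩ := hst x hx
    exact Finset.mem_biUnion.mpr ⟨z, hz, Finset.mem_filter.mpr ⟨hx, hxz⟩⟩
  calc (s.card : ℝ) ≤ ∑ z ∈ t, ((s.filter fun x => dist x z ≤ R).card : ℝ) := by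
        exact_mod_cast (Finset.card_le_card hcover).trans Finset.card_biUnion_le
    _ ≤ ∑ _z ∈ t, ((2 * R + r) / r) ^ finrank ℝ V := by
        refine Finset.sum_le_sum fun z _ => Finset.card_le_of_pairwise_lt_dist (c := z) hr hR ?_ ?_
        · intro x hx
          exact mem_closedBall.mpr (Finset.mem_filter.mp hx).2
        · exact hsep.mono fun x hx => (Finset.mem_filter.mp hx).1
    _ = t.card * ((2 * R + r) / r) ^ finrank ℝ V := by rw [Finset.sum_const, nsmul_eq_mul]

end Balls

section Packing

variable {n : ℕ} {F : Set (Pt n)} {δ : ℝ}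

theorem card_le_packingNumber {Z : Finset (Pt n)} (hZF : ↑Z ⊆ F)
    (hZ : (Z : Set (Pt n)).PairwiseDisjoint fun x => closedBall x δ) :
    (Z.card : ℕ∞) ≤ packingNumber F δ :=
  le_iSup₂_of_le Z hZF (le_iSup_of_le hZ le_rfl)

theorem packingNumber_anti_s3 {δ₁ δ₂ : ℝ} (h : δ₁ ≤ δ₂) : packingNumber F δ₂ ≤ packingNumber F δ₁ :=
  iSup₂_le fun _ hZF => iSup_le fun hZ => card_le_packingNumber hZF
    fun _ hx _ hy hxy => (hZ hx hy hxy).mono (closedBall_subset_closedBall h)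
      (closedBall_subset_closedBall h)

theorem packingNumber_lt_top (hF : IsBounded F) (hδ : 0 < δ) :
    packingNumber F δ < ⊤ := by
  obtain ⟨R, hR, hFR⟩ := hF.subset_closedBall_lt 0 0
  refine lt_of_le_of_lt (iSup₂_le fun Z hZF => iSup_le fun hZ => ?_)
    (ENat.natCast_lt_top ⌈((2 * R + 2 * δ) / (2 * δ)) ^ n⌉₊)
  have hcard := Z.card_le_of_pairwise_lt_dist (by positivity) hR.le (hZF.trans hFR)
    ((pairwiseDisjoint_closedBall_iff hδ.le).mp hZ)
  rw [finrank_euclideanSpace_fin] at hcard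
  exact_mod_cast hcard.trans (Nat.le_ceil _)

theorem exists_packing_card_eq_packingNumber (hF : IsBounded F) (hδ : 0 < δ) :
    ∃ Z : Finset (Pt n), ↑Z ⊆ F ∧ (Z : Set (Pt n)).PairwiseDisjoint (fun x => closedBall x δ) ∧
      (Z.card : ℕ∞) = packingNumber F δ := by
  let Packing := {Z : Finset (Pt n) //
    ↑Z ⊆ F ∧ (Z : Set (Pt n)).PairwiseDisjoint fun x => closedBall x δ}
  have : Nonempty Packing := ⟨⟨∅, by simp, by simp⟩⟩
  have hsup : ⨆ Z : Packing, (Z.1.card : ℕ∞) = packingNumber F δ := by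
    rw [iSup_subtype, _root_.packingNumber]
    simp only [iSup_and]
  obtain ⟨⟨Z, hZF, hZ⟩, hZmax⟩ :=
    ENat.exists_eq_iSup_of_lt_top (hsup ▸ packingNumber_lt_top hF hδ)
  exact ⟨Z, hZF, hZ, hZmax.trans hsup⟩

theorem exists_dist_le_of_card_eq_packingNumber (hδ : 0 ≤ δ) {Z : Finset (Pt n)} (hZF : ↑Z ⊆ F)
    (hZ : (Z : Set (Pt n)).PairwiseDisjoint fun x => closedBall x δ)
    (hcard : (Z.card : ℕ∞) = packingNumber F δ) {w : Pt n} (hw : w ∈ F) :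
    ∃ z ∈ Z, dist w z ≤ 2 * δ := by
  classical
  by_contra! hfar
  have hwZ : w ∉ Z := fun hwZ => by linarith [hfar w hwZ, dist_self w]
  have hins : ((insert w Z : Finset (Pt n)) : Set (Pt n)).PairwiseDisjoint
      fun x => closedBall x δ := by
    rw [Finset.coe_insert]
    exact hZ.insert fun z hz _ => closedBall_disjoint_closedBall (by linarith [hfar z hz])
  have hle := card_le_packingNumber (by simpa [Set.insert_subset_iff] using ⟨hw, hZF⟩) hins
  rw [Finset.card_insert_of_notMem hwZ, ← hcard] at hle
  norm_cast at hle
  omega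

end Packing

section BoxDimension

variable {n : ℕ} {F : Set (Pt n)}

theorem eventually_packingNumber_le_of_upperBoxDim_lt {s : ℝ≥0} (hs : upperBoxDim F < s) :
    ∀ᶠ δ in 𝓝[>] 0, ((packingNumber F δ).toNat : ℝ) ≤ δ ^ (-(s : ℝ)) := by
  filter_upwards [eventually_lt_of_limsup_lt hs, Ioo_mem_nhdsGT one_pos] with δ hlt ⟨hδ0, hδ1⟩
  have hlogδ : 0 < -Real.log δ := neg_pos.mpr (Real.log_neg hδ0 hδ1)
  obtain hN | hN := eq_or_ne (packingNumber F δ).toNat 0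
  · rw [hN, Nat.cast_zero]
    positivity
  rw [← ENNReal.ofReal_coe_nnreal, ENNReal.ofReal_lt_ofReal_iff', div_lt_iff₀ hlogδ] at hlt
  rw [← Real.log_le_log_iff (by positivity) (by positivity), Real.log_rpow hδ0]
  linarith [hlt.1]

theorem upperBoxDim_le_of_eventually_packingNumber_le {s : ℝ≥0} {C : ℝ} (hC : 0 < C)
    (h : ∀ᶠ δ in 𝓝[>] 0, ((packingNumber F δ).toNat : ℝ) ≤ C * δ ^ (-(s : ℝ))) :
    upperBoxDim F ≤ s := by
  have hlog : Tendsto (fun δ => -Real.log δ) (𝓝[>] 0) atTop :=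
    tendsto_neg_atBot_atTop.comp Real.tendsto_log_nhdsGT_zero
  have hlim : Tendsto (fun δ => ENNReal.ofReal (s + Real.log C / -Real.log δ)) (𝓝[>] 0)
      (𝓝 s) := by
    simpa using ENNReal.tendsto_ofReal ((tendsto_const_nhds.div_atTop hlog).const_add (s : ℝ))
  refine (limsup_le_limsup ?_).trans_eq hlim.limsup_eq
  filter_upwards [h, Ioo_mem_nhdsGT one_pos] with δ hN ⟨hδ0, hδ1⟩
  have hlogδ : 0 < -Real.log δ := neg_pos.mpr (Real.log_neg hδ0 hδ1)
  obtain hN0 | hN0 := eq_or_ne (packingNumber F δ).toNat 0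
  · simp [hN0]
  refine ENNReal.ofReal_le_ofReal ((div_le_iff₀ hlogδ).mpr ?_)
  calc Real.log ((packingNumber F δ).toNat : ℝ) ≤ Real.log (C * δ ^ (-(s : ℝ))) :=
        Real.log_le_log (by positivity) hN
    _ = (s + Real.log C / -Real.log δ) * -Real.log δ := by
        rw [Real.log_mul hC.ne' (by positivity), Real.log_rpow hδ0]
        have hlog0 : Real.log δ ≠ 0 := (Real.log_neg hδ0 hδ1).ne
        field_simp
        ring

theorem eventually_packingNumber_le_of_dyadic (hF : IsBounded F) {s : ℝ≥0}
    (h : ∀ᶠ k in atTop, ((packingNumber F (2⁻¹ ^ k)).toNat : ℝ) ≤ ((2 : ℝ)⁻¹ ^ k) ^ (-(s : ℝ))) :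
    ∀ᶠ δ in 𝓝[>] 0, ((packingNumber F δ).toNat : ℝ) ≤ 2 ^ (s : ℝ) * δ ^ (-(s : ℝ)) := by
  obtain ⟨K, hK⟩ := eventually_atTop.mp h
  filter_upwards [Ioc_mem_nhdsGT (pow_pos (by norm_num : (0 : ℝ) < 2⁻¹) K)] with δ ⟨hδ0, hδK⟩
  obtain ⟨k, hk1, hk⟩ := exists_nat_pow_near_of_lt_one hδ0
    (hδK.trans (pow_le_one₀ (by norm_num) (by norm_num))) (by norm_num : (0 : ℝ) < 2⁻¹)
    (by norm_num)
  have hKk : K ≤ k + 1 :=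
    ((pow_lt_pow_iff_right_of_lt_one₀ (by norm_num) (by norm_num)).mp (hk1.trans_le hδK)).le
  calc ((packingNumber F δ).toNat : ℝ) ≤ (packingNumber F (2⁻¹ ^ (k + 1))).toNat := by
        exact_mod_cast ENat.toNat_le_toNat (packingNumber_anti_s3 hk1.le)
          (packingNumber_lt_top hF (by positivity)).ne
    _ ≤ ((2 : ℝ)⁻¹ ^ (k + 1)) ^ (-(s : ℝ)) := hK _ hKk
    _ = 2 ^ (s : ℝ) * ((2 : ℝ)⁻¹ ^ k) ^ (-(s : ℝ)) := by
        rw [pow_succ, Real.mul_rpow (by positivity) (by norm_num), Real.inv_rpow zero_le_two,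
          Real.rpow_neg zero_le_two, inv_inv, mul_comm]
    _ ≤ 2 ^ (s : ℝ) * δ ^ (-(s : ℝ)) :=
        mul_le_mul_of_nonneg_left (Real.rpow_le_rpow_of_nonpos hδ0 hk (neg_nonpos.mpr s.2))
          (by positivity)

end BoxDimension

section CriticalExponent

variable {n : ℕ} {E : Set (Pt n)}

theorem critExp_le_of_accSeries_lt_top {s : ℝ≥0} (hs : accSeries E s < ⊤) : critExp E ≤ s :=
  iInf₂_le s hs

theorem le_critExp {d : ℝ≥0∞} (h : ∀ s : ℝ≥0, accSeries E s < ⊤ → d ≤ s) : d ≤ critExp E :=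
  le_iInf₂ h

end CriticalExponent

section UpperBound

variable {n : ℕ} {E X : Set (Pt n)}

theorem lt_dist_of_closedBall_inter_eq_singleton_s3 {α : Type*} [PseudoMetricSpace α] {S : Set α}
    {x y : α} {ρ : ℝ} (h : closedBall x ρ ∩ S = {x}) (hy : y ∈ S) (hyx : y ≠ x) :
    ρ < dist y x := by
  by_contra! hle
  have hmem : y ∈ closedBall x ρ ∩ S := ⟨hle, hy⟩
  rw [h] at hmem
  exact hyx hmem

def dyadicShell (E : Set (Pt n)) (k : ℕ) : Set (Pt n) :=
  {x ∈ E | (2 : ℝ)⁻¹ ^ (k + 1) < 1 - ‖x‖ ∧ 1 - ‖x‖ ≤ 2⁻¹ ^ k}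

theorem subset_iUnion_dyadicShell (hE : E ⊆ ball 0 1) : E ⊆ ⋃ k, dyadicShell E k := by
  intro x hx
  have hx1 : ‖x‖ < 1 := mem_ball_zero_iff.mp (hE hx)
  obtain ⟨k, hk⟩ := exists_nat_pow_near_of_lt_one (x := 1 - ‖x‖) (by linarith)
    (by linarith [norm_nonneg x])
    (by norm_num : (0 : ℝ) < 2⁻¹) (by norm_num)
  exact mem_iUnion.mpr ⟨k, hx, hk⟩

theorem pairwise_lt_dist_dyadicShell {c₁ : ℝ} (hc₁ : 0 < c₁)
    (hsep : ∀ x ∈ E, closedBall x (c₁ * (1 - ‖x‖)) ∩ E = {x}) (k : ℕ) :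
    (dyadicShell E k).Pairwise fun x y => c₁ * 2⁻¹ ^ (k + 1) < dist x y := fun _ hx y hy hxy =>
  (mul_lt_mul_of_pos_left hy.2.1 hc₁).trans
    (lt_dist_of_closedBall_inter_eq_singleton_s3 (hsep y hy.1) hx.1 hxy)

theorem card_le_of_subset_dyadicShell (hX : IsBounded X) {c₁ c : ℝ} (hc₁ : 0 < c₁)
    (hsep : ∀ x ∈ E, closedBall x (c₁ * (1 - ‖x‖)) ∩ E = {x}) (hc : 0 ≤ c)
    (happrox : ∀ x ∈ E, ∃ z ∈ X, dist x z ≤ c * (1 - ‖x‖)) {k : ℕ} {s : Finset (Pt n)}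
    (hs : ↑s ⊆ dyadicShell E k) :
    (s.card : ℝ) ≤ (packingNumber X (2⁻¹ ^ k)).toNat * ((4 * (c + 2) + c₁) / c₁) ^ n := by
  have hk : (0 : ℝ) < 2⁻¹ ^ k := by positivity
  obtain ⟨Z, hZX, hZ, hZcard⟩ := exists_packing_card_eq_packingNumber hX hk
  have hnear : ∀ x ∈ s, ∃ z ∈ Z, dist x z ≤ (c + 2) * 2⁻¹ ^ k := by
    intro x hx
    obtain ⟨hxE, -, hxk⟩ := hs hx
    obtain ⟨w, hwX, hxw⟩ := happrox x hxE
    obtain ⟨z, hzZ, hwz⟩ := exists_dist_le_of_card_eq_packingNumber hk.le hZX hZ hZcard hwX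
    refine ⟨z, hzZ, ?_⟩
    calc dist x z ≤ dist x w + dist w z := dist_triangle x w z
      _ ≤ c * 2⁻¹ ^ k + 2 * 2⁻¹ ^ k := add_le_add (hxw.trans (by gcongr)) hwz
      _ = (c + 2) * 2⁻¹ ^ k := by ring
  have hcount := s.card_le_card_mul_of_pairwise_lt_dist (by positivity) (by positivity) hnear
    ((pairwise_lt_dist_dyadicShell hc₁ hsep k).mono hs)
  rw [finrank_euclideanSpace_fin] at hcount
  rw [← hZcard, ENat.toNat_natCast]
  convert hcount using 3
  field_simp
  ring

theorem tsum_dyadicShell_le (hX : IsBounded X) {c₁ c : ℝ} (hc₁ : 0 < c₁)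
    (hsep : ∀ x ∈ E, closedBall x (c₁ * (1 - ‖x‖)) ∩ E = {x}) (hc : 0 ≤ c)
    (happrox : ∀ x ∈ E, ∃ z ∈ X, dist x z ≤ c * (1 - ‖x‖)) (k : ℕ) {t : ℝ} (ht : 0 ≤ t) :
    ∑' x : dyadicShell E k, ENNReal.ofReal ((1 - ‖(x : Pt n)‖) ^ t) ≤
      ENNReal.ofReal ((packingNumber X (2⁻¹ ^ k)).toNat * ((4 * (c + 2) + c₁) / c₁) ^ n *
        ((2 : ℝ)⁻¹ ^ k) ^ t) := by
  have hk : (0 : ℝ) < 2⁻¹ ^ (k + 1) := by positivity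
  have hball : dyadicShell E k ⊆ ball 0 1 := fun x hx =>
    mem_ball_zero_iff.mpr (by linarith [hx.2.1])
  have hfin : (dyadicShell E k).Finite := (isBounded_ball.subset hball).finite_of_pairwise_lt_dist
    (by positivity) (pairwise_lt_dist_dyadicShell hc₁ hsep k)
  calc ∑' x : dyadicShell E k, ENNReal.ofReal ((1 - ‖(x : Pt n)‖) ^ t)
      ≤ ∑' _ : dyadicShell E k, ENNReal.ofReal (((2 : ℝ)⁻¹ ^ k) ^ t) :=
        ENNReal.tsum_le_tsum fun x => ENNReal.ofReal_le_ofReal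
          (Real.rpow_le_rpow (by linarith [x.2.2.1]) x.2.2.2 ht)
    _ = ENNReal.ofReal (hfin.toFinset.card * ((2 : ℝ)⁻¹ ^ k) ^ t) := by
        rw [ENNReal.tsum_set_const, hfin.encard_eq_coe_toFinset_card,
          ENNReal.ofReal_mul (by positivity), ENNReal.ofReal_natCast]
        rfl
    _ ≤ _ := ENNReal.ofReal_le_ofReal (mul_le_mul_of_nonneg_right
        (card_le_of_subset_dyadicShell hX hc₁ hsep hc happrox (by simp)) (by positivity))

theorem accSeries_lt_top_of_upperBoxDim_lt (hX : IsBounded X) (hE : E ⊆ ball 0 1)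
    (hsep : SeparatedSet E) {c : ℝ} (hc : 0 ≤ c)
    (happrox : ∀ x ∈ E, ∃ z ∈ X, dist x z ≤ c * (1 - ‖x‖)) {t : ℝ≥0}
    (ht : upperBoxDim X < t) : accSeries E t < ⊤ := by
  obtain ⟨c₁, hc₁, -, hsep⟩ := hsep
  obtain ⟨s, hXs, hst⟩ := ENNReal.lt_iff_exists_nnreal_btwn.mp ht
  have hst' : (s : ℝ) < t := by exact_mod_cast hst
  set B := ((4 * (c + 2) + c₁) / c₁) ^ n
  set a : ℕ → ℝ := fun k => (packingNumber X (2⁻¹ ^ k)).toNat * B * ((2 : ℝ)⁻¹ ^ k) ^ (t : ℝ)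
  have hN : ∀ᶠ k in atTop,
      ((packingNumber X (2⁻¹ ^ k)).toNat : ℝ) ≤ ((2 : ℝ)⁻¹ ^ k) ^ (-(s : ℝ)) :=
    (tendsto_pow_atTop_nhdsWithin_zero_of_lt_one (by norm_num) (by norm_num)).eventually
      (eventually_packingNumber_le_of_upperBoxDim_lt hXs)
  have hρ : (2 : ℝ)⁻¹ ^ ((t : ℝ) - s) < 1 :=
    Real.rpow_lt_one (by norm_num) (by norm_num) (by linarith)
  have ha : Summable a := by
    refine Summable.of_norm_bounded_eventually_nat
      ((summable_geometric_of_lt_one (by positivity) hρ).mul_left B) ?_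
    filter_upwards [hN] with k hk
    rw [Real.norm_of_nonneg (by positivity)]
    calc a k ≤ ((2 : ℝ)⁻¹ ^ k) ^ (-(s : ℝ)) * B * ((2 : ℝ)⁻¹ ^ k) ^ (t : ℝ) := by
          dsimp only [a]
          gcongr
      _ = B * ((2 : ℝ)⁻¹ ^ ((t : ℝ) - s)) ^ k := by
        rw [mul_right_comm, ← Real.rpow_add (by positivity), neg_add_eq_sub,
          Real.rpow_pow_comm (by norm_num), mul_comm]
  let g : Pt n → ℝ≥0∞ := fun x => ENNReal.ofReal ((1 - ‖x‖) ^ (t : ℝ))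
  calc accSeries E t ≤ ∑' k, ∑' x : dyadicShell E k, g x :=
        (ENNReal.tsum_mono_subtype g (subset_iUnion_dyadicShell hE)).trans
          (ENNReal.tsum_iUnion_le_tsum g (dyadicShell E))
    _ ≤ ∑' k, ENNReal.ofReal (a k) :=
        ENNReal.tsum_le_tsum fun k => tsum_dyadicShell_le hX hc₁ hsep hc happrox k t.2
    _ = ENNReal.ofReal (∑' k, a k) :=
        (ENNReal.ofReal_tsum_of_nonneg (fun k => by positivity) ha).symm
    _ < ⊤ := ENNReal.ofReal_lt_top

theorem critExp_le_upperBoxDim_s3 (hX : IsBounded X) (hE : E ⊆ ball 0 1)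
    (hsep : SeparatedSet E) {c : ℝ} (hc : 0 ≤ c)
    (happrox : ∀ x ∈ E, ∃ z ∈ X, dist x z ≤ c * (1 - ‖x‖)) : critExp E ≤ upperBoxDim X :=
  le_of_forall_gt_imp_ge_of_dense fun d hd => by
    obtain ⟨t, hXt, htd⟩ := ENNReal.lt_iff_exists_nnreal_btwn.mp hd
    exact (critExp_le_of_accSeries_lt_top
      (accSeries_lt_top_of_upperBoxDim_lt hX hE hsep hc happrox hXt)).trans htd.le

end UpperBound

section LimitSet

variable {n : ℕ} {E X : Set (Pt n)}

theorem separatedSet_of_lt_dist (hE : E ⊆ ball 0 1) {c₁ : ℝ} (hc₁ : 0 < c₁) (hc₁' : c₁ < 1)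
    (h : ∀ x ∈ E, ∀ y ∈ E, y ≠ x → c₁ * (1 - ‖x‖) < dist y x) : SeparatedSet E := by
  refine ⟨c₁, hc₁, hc₁', fun x hx => Set.eq_singleton_iff_unique_mem.mpr ⟨⟨?_, hx⟩, ?_⟩⟩
  · have := mem_ball_zero_iff.mp (hE hx)
    exact mem_closedBall_self (by nlinarith)
  · rintro y ⟨hyx, hy⟩
    by_contra hne
    exact (mem_closedBall.mp hyx).not_gt (h x hx y hy hne)

theorem SeparatedSet.isDiscreteSet (hsep : SeparatedSet E) (hE : E ⊆ ball 0 1) :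
    IsDiscreteSet E := by
  obtain ⟨c₁, hc₁, -, hsep⟩ := hsep
  intro x hx
  have := mem_ball_zero_iff.mp (hE hx)
  exact ⟨c₁ * (1 - ‖x‖), by nlinarith, hsep x hx⟩

theorem limitSet_subset_of_forall_dist_le (hX : IsClosed X) {c : ℝ} (hc : 0 ≤ c)
    (happrox : ∀ x ∈ E, ∃ z ∈ X, dist x z ≤ c * (1 - ‖x‖))
    (hfin : ∀ ρ < 1, (E ∩ closedBall 0 ρ).Finite) : limitSet E ⊆ X := by
  rintro w ⟨hwcl, hwE⟩
  have hw : 1 ≤ ‖w‖ := by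
    by_contra! hw
    obtain ⟨ρ, hwρ, hρ⟩ := exists_between hw
    have hmem : w ∈ closure (E ∩ closedBall 0 ρ) :=
      closure_mono (inter_subset_inter_right E ball_subset_closedBall)
        (isOpen_ball.closure_inter ⟨hwcl, mem_ball_zero_iff.mpr hwρ⟩)
    rw [(hfin ρ hρ).isClosed.closure_eq] at hmem
    exact hwE hmem.1
  rw [← hX.closure_eq, Metric.mem_closure_iff]
  intro ε hε
  obtain ⟨x, hxE, hwx⟩ := Metric.mem_closure_iff.mp hwcl (ε / (c + 1)) (by positivity)
  obtain ⟨z, hzX, hxz⟩ := happrox x hxE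
  have hgap : 1 - ‖x‖ ≤ dist w x := by linarith [norm_sub_norm_le w x, dist_eq_norm w x]
  refine ⟨z, hzX, ?_⟩
  calc dist w z ≤ dist w x + dist x z := dist_triangle w x z
    _ ≤ (c + 1) * dist w x := by nlinarith
    _ < (c + 1) * (ε / (c + 1)) := by gcongr
    _ = ε := by field_simp

end LimitSet

section RadialLift

variable {n : ℕ} {X : Set (Pt n)} {Z : ℕ → Finset (Pt n)}

def radialLift (Z : ℕ → Finset (Pt n)) : Set (Pt n) :=
  Set.range fun p : Σ k, Z k => (1 - (2 : ℝ)⁻¹ ^ (p.1 + 1)) • (p.2 : Pt n)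

theorem norm_one_sub_pow_smul_of_mem (hZ : ∀ k, ↑(Z k) ⊆ sphere (0 : Pt n) 1) {k : ℕ}
    {v : Pt n} (hv : v ∈ Z k) : ‖(1 - (2 : ℝ)⁻¹ ^ (k + 1)) • v‖ = 1 - 2⁻¹ ^ (k + 1) :=
  norm_one_sub_smul (mem_sphere_zero_iff_norm.mp (hZ k hv))
    (pow_le_one₀ (by norm_num) (by norm_num))

theorem radialLift_subset_ball (hZ : ∀ k, ↑(Z k) ⊆ sphere (0 : Pt n) 1) :
    radialLift Z ⊆ ball 0 1 := by
  rintro _ ⟨⟨k, z, hz⟩, rfl⟩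
  rw [mem_ball_zero_iff, norm_one_sub_pow_smul_of_mem hZ hz]
  linarith [pow_pos (by norm_num : (0 : ℝ) < 2⁻¹) (k + 1)]

theorem exists_dist_radialLift_le (hX : X ⊆ sphere 0 1) (hZX : ∀ k, ↑(Z k) ⊆ X) :
    ∀ x ∈ radialLift Z, ∃ z ∈ X, dist x z ≤ 1 * (1 - ‖x‖) := by
  rintro _ ⟨⟨k, z, hz⟩, rfl⟩
  have hzn := mem_sphere_zero_iff_norm.mp (hX (hZX k hz))
  refine ⟨z, hZX k hz, le_of_eq ?_⟩
  rw [one_mul, norm_one_sub_smul hzn (pow_le_one₀ (by norm_num) (by norm_num)), sub_sub_cancel,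
    dist_one_sub_smul_self hzn (by positivity)]

theorem lt_dist_of_mem_radialLift (hZ : ∀ k, ↑(Z k) ⊆ sphere (0 : Pt n) 1)
    (hsep : ∀ k, (Z k : Set (Pt n)).Pairwise fun z w => 2⁻¹ ^ (k + 1) < dist z w) :
    ∀ x ∈ radialLift Z, ∀ y ∈ radialLift Z, y ≠ x → 4⁻¹ * (1 - ‖x‖) < dist y x := by
  rintro _ ⟨⟨k, z, hz⟩, rfl⟩ _ ⟨⟨j, w, hw⟩, rfl⟩ hne
  have hhalf : ∀ {i l : ℕ}, i < l → (2 : ℝ)⁻¹ ^ (l + 1) ≤ 2⁻¹ ^ (i + 1) * 2⁻¹ := fun hil => by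
    rw [← pow_succ]
    exact pow_le_pow_of_le_one (by norm_num) (by norm_num) (by omega)
  have hgap := abs_norm_sub_norm_le ((1 - (2 : ℝ)⁻¹ ^ (j + 1)) • (w : Pt n))
    ((1 - (2 : ℝ)⁻¹ ^ (k + 1)) • (z : Pt n))
  rw [norm_one_sub_pow_smul_of_mem hZ hw, norm_one_sub_pow_smul_of_mem hZ hz, ← dist_eq_norm]
    at hgap
  simp only at hne ⊢
  rw [norm_one_sub_pow_smul_of_mem hZ hz, sub_sub_cancel]
  have hk : (0 : ℝ) < 2⁻¹ ^ (k + 1) := by positivity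
  -- Distinct levels are already separated by their norms; within a level the packing separates.
  rcases lt_trichotomy j k with hjk | rfl | hjk
  · linarith [hhalf hjk, neg_abs_le ((1 - (2 : ℝ)⁻¹ ^ (j + 1)) - (1 - 2⁻¹ ^ (k + 1)))]
  · have hwz : w ≠ z := by
      rintro rfl
      exact hne rfl
    have hk2 : (2 : ℝ)⁻¹ ^ (j + 1) ≤ 2⁻¹ := by
      simpa using pow_le_pow_of_le_one (by norm_num : (0 : ℝ) ≤ 2⁻¹) (by norm_num) j.succ_pos
    rw [dist_smul₀, Real.norm_of_nonneg (by linarith)]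
    nlinarith [hsep j hw hz hwz]
  · linarith [hhalf hjk, le_abs_self ((1 - (2 : ℝ)⁻¹ ^ (j + 1)) - (1 - 2⁻¹ ^ (k + 1)))]

theorem finite_radialLift_inter_closedBall (hZ : ∀ k, ↑(Z k) ⊆ sphere (0 : Pt n) 1) {ρ : ℝ}
    (hρ : ρ < 1) : (radialLift Z ∩ closedBall 0 ρ).Finite := by
  obtain ⟨K, hK⟩ := exists_pow_lt_of_lt_one (sub_pos.mpr hρ) (by norm_num : (2 : ℝ)⁻¹ < 1)
  refine ((Finset.range K).finite_toSet.biUnion fun k _ =>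
    (Z k).finite_toSet.image fun z => (1 - (2 : ℝ)⁻¹ ^ (k + 1)) • z).subset ?_
  rintro _ ⟨⟨⟨k, z, hz⟩, rfl⟩, hxρ⟩
  rw [mem_closedBall_zero_iff, norm_one_sub_pow_smul_of_mem hZ hz] at hxρ
  have hkK : k < K := by
    by_contra! hKk
    linarith [pow_le_pow_of_le_one (by norm_num : (0 : ℝ) ≤ 2⁻¹) (by norm_num)
      (by omega : K ≤ k + 1)]
  exact mem_biUnion (Finset.mem_range.mpr hkK) (mem_image_of_mem _ hz)

theorem subset_closure_radialLift (hZ : ∀ k, ↑(Z k) ⊆ sphere (0 : Pt n) 1)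
    (hnet : ∀ k, ∀ x ∈ X, ∃ z ∈ Z k, dist x z ≤ 2 * 2⁻¹ ^ (k + 1)) :
    X ⊆ closure (radialLift Z) := by
  intro x hx
  rw [Metric.mem_closure_iff]
  intro ε hε
  obtain ⟨k, hk⟩ := exists_pow_lt_of_lt_one (by positivity : 0 < ε / 3)
    (by norm_num : (2 : ℝ)⁻¹ < 1)
  obtain ⟨z, hz, hxz⟩ := hnet k x hx
  refine ⟨_, ⟨⟨k, z, hz⟩, rfl⟩, ?_⟩
  have hkk : (2 : ℝ)⁻¹ ^ (k + 1) ≤ 2⁻¹ ^ k :=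
    pow_le_pow_of_le_one (by norm_num) (by norm_num) k.le_succ
  calc dist x ((1 - (2 : ℝ)⁻¹ ^ (k + 1)) • z)
      ≤ dist x z + dist z ((1 - (2 : ℝ)⁻¹ ^ (k + 1)) • z) := dist_triangle _ _ _
    _ = dist x z + 2⁻¹ ^ (k + 1) := by
        rw [dist_comm z, dist_one_sub_smul_self (mem_sphere_zero_iff_norm.mp (hZ k hz))
          (by positivity)]
    _ < ε := by linarith

theorem limitSet_radialLift (hX : X ⊆ sphere 0 1) (hXcl : IsClosed X) (hZX : ∀ k, ↑(Z k) ⊆ X)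
    (hnet : ∀ k, ∀ x ∈ X, ∃ z ∈ Z k, dist x z ≤ 2 * 2⁻¹ ^ (k + 1)) :
    limitSet (radialLift Z) = X := by
  have hZ : ∀ k, ↑(Z k) ⊆ sphere (0 : Pt n) 1 := fun k => (hZX k).trans hX
  refine (limitSet_subset_of_forall_dist_le hXcl zero_le_one (exists_dist_radialLift_le hX hZX)
    fun ρ hρ => finite_radialLift_inter_closedBall hZ hρ).antisymm
    fun x hx => ⟨subset_closure_radialLift hZ hnet hx, fun hxE => ?_⟩
  linarith [mem_ball_zero_iff.mp (radialLift_subset_ball hZ hxE),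
    mem_sphere_zero_iff_norm.mp (hX hx)]

theorem accSeries_radialLift (hZ : ∀ k, ↑(Z k) ⊆ sphere (0 : Pt n) 1) (s : ℝ) :
    accSeries (radialLift Z) s =
      ∑' k, ENNReal.ofReal ((Z k).card * ((2 : ℝ)⁻¹ ^ (k + 1)) ^ s) := by
  have hinj : Function.Injective
      fun p : Σ k, Z k => (1 - (2 : ℝ)⁻¹ ^ (p.1 + 1)) • (p.2 : Pt n) := by
    rintro ⟨k, z, hz⟩ ⟨j, w, hw⟩ h
    have hkj := congrArg norm h
    simp only [norm_one_sub_pow_smul_of_mem hZ hz, norm_one_sub_pow_smul_of_mem hZ hw,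
      sub_right_inj] at hkj h
    obtain rfl : k = j := by
      simpa using pow_right_injective₀ (by norm_num : (0 : ℝ) < 2⁻¹) (by norm_num) hkj
    obtain rfl : z = w := smul_right_injective _
      (sub_pos.mpr (pow_lt_one₀ (by norm_num) (by norm_num) k.succ_ne_zero)).ne' h
    rfl
  rw [accSeries, radialLift, tsum_range (fun x : Pt n => ENNReal.ofReal ((1 - ‖x‖) ^ s)) hinj,
    ENNReal.tsum_sigma']
  refine tsum_congr fun k => ?_
  rw [tsum_fintype,
    Finset.sum_congr rfl fun z _ => by rw [norm_one_sub_pow_smul_of_mem hZ z.2, sub_sub_cancel],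
    Finset.sum_const, Finset.card_univ, Fintype.card_coe, nsmul_eq_mul,
    ENNReal.ofReal_mul (by positivity), ENNReal.ofReal_natCast]

theorem upperBoxDim_le_critExp_radialLift
    (hX : IsBounded X) (hZ : ∀ k, ↑(Z k) ⊆ sphere (0 : Pt n) 1)
    (hZcard : ∀ k, ((Z k).card : ℕ∞) = packingNumber X (2⁻¹ ^ (k + 1))) :
    upperBoxDim X ≤ critExp (radialLift Z) := by
  refine le_critExp fun s hs => ?_
  rw [accSeries_radialLift hZ] at hs
  have hlim : Tendsto (fun k => ((packingNumber X (2⁻¹ ^ k)).toNat : ℝ) * ((2 : ℝ)⁻¹ ^ k) ^ (s : ℝ))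
      atTop (𝓝 0) := by
    rw [← tendsto_add_atTop_iff_nat 1]
    convert (ENNReal.tendsto_toReal ENNReal.zero_ne_top).comp
      (ENNReal.tendsto_atTop_zero_of_tsum_ne_top hs.ne) using 2 with k
    · rw [Function.comp_apply, ENNReal.toReal_ofReal (by positivity), ← hZcard,
        ENat.toNat_natCast]
    · exact ENNReal.toReal_zero.symm
  have hN : ∀ᶠ k in atTop,
      ((packingNumber X (2⁻¹ ^ k)).toNat : ℝ) ≤ ((2 : ℝ)⁻¹ ^ k) ^ (-(s : ℝ)) := by
    filter_upwards [hlim.eventually (ge_mem_nhds one_pos)] with k hk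
    rwa [Real.rpow_neg (by positivity), ← mul_one (_ ^ _)⁻¹, le_inv_mul_iff₀' (by positivity)]
  exact upperBoxDim_le_of_eventually_packingNumber_le (by positivity)
    (eventually_packingNumber_le_of_dyadic hX hN)

end RadialLift

theorem exists_critExp_eq_upperBoxDim {n : ℕ} {X : Set (Pt n)} (hX : X ⊆ sphere 0 1)
    (hXcl : IsClosed X) :
    ∃ E : Set (Pt n), E ⊆ ball 0 1 ∧ IsDiscreteSet E ∧ SeparatedSet E ∧
      WellApproximated E ∧ limitSet E = X ∧ critExp E = upperBoxDim X := by
  have hXb : IsBounded X := isBounded_sphere.subset hX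
  choose Z hZX hZ hZcard using fun k : ℕ =>
    exists_packing_card_eq_packingNumber hXb (by positivity : (0 : ℝ) < 2⁻¹ ^ (k + 1))
  have hZs : ∀ k, ↑(Z k) ⊆ sphere (0 : Pt n) 1 := fun k => (hZX k).trans hX
  have hnet : ∀ k, ∀ x ∈ X, ∃ z ∈ Z k, dist x z ≤ 2 * 2⁻¹ ^ (k + 1) := fun k _ hx =>
    exists_dist_le_of_card_eq_packingNumber (by positivity) (hZX k) (hZ k) (hZcard k) hx
  have hsepZ : ∀ k, (Z k : Set (Pt n)).Pairwise fun z w => 2⁻¹ ^ (k + 1) < dist z w := fun k =>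
    ((pairwiseDisjoint_closedBall_iff (by positivity)).mp (hZ k)).mono' fun z w h => by
      linarith [pow_pos (by norm_num : (0 : ℝ) < 2⁻¹) (k + 1)]
  have hE := radialLift_subset_ball hZs
  have hsep : SeparatedSet (radialLift Z) :=
    separatedSet_of_lt_dist hE (by norm_num) (by norm_num) (lt_dist_of_mem_radialLift hZs hsepZ)
  have hlim := limitSet_radialLift hX hXcl hZX hnet
  have happrox := exists_dist_radialLift_le hX hZX
  refine ⟨radialLift Z, hE, hsep.isDiscreteSet hE, hsep, ⟨1, le_rfl, hlim ▸ happrox⟩, hlim,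
    le_antisymm (critExp_le_upperBoxDim_s3 hXb hE hsep zero_le_one happrox)
      (upperBoxDim_le_critExp_radialLift hXb hZs hZcard)⟩

theorem upperBoxDim_eq_max_critExp_general {n : ℕ}
    (X : Set (Pt n)) (hX : X ⊆ sphere 0 1) (hXcl : IsClosed X) :
    (∃ E : Set (Pt n), E ⊆ ball 0 1 ∧ IsDiscreteSet E ∧ SeparatedSet E ∧
        WellApproximated E ∧ limitSet E = X ∧ critExp E = upperBoxDim X) ∧
      ∀ E : Set (Pt n), E ⊆ ball 0 1 → IsDiscreteSet E → SeparatedSet E →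
        WellApproximated E → limitSet E = X → critExp E ≤ upperBoxDim X := by
  refine ⟨exists_critExp_eq_upperBoxDim hX hXcl, fun E hE _ hsep hwa hlim => ?_⟩
  obtain ⟨c, hc, happrox⟩ := hwa
  exact critExp_le_upperBoxDim_s3 (isBounded_sphere.subset hX) hE hsep (by linarith)
    (hlim ▸ happrox)

/-- **Theorem: the upper box dimension of a non-empty closed `X ⊆ S^{n-1}` is the maximum of
`δ(E)` over separated, well-approximated discrete `E ⊆ 𝔻ⁿ` with `L(E) = X`.** -/
theorem upperBoxDim_eq_max_critExp {n : ℕ} (hn : 1 ≤ n)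
    (X : Set (Pt n)) (hX : X ⊆ sphere 0 1) (hXne : X.Nonempty) (hXcl : IsClosed X) :
    (∃ E : Set (Pt n), E ⊆ ball 0 1 ∧ IsDiscreteSet E ∧ SeparatedSet E ∧
        WellApproximated E ∧ limitSet E = X ∧ critExp E = upperBoxDim X) ∧
      ∀ E : Set (Pt n), E ⊆ ball 0 1 → IsDiscreteSet E → SeparatedSet E →
        WellApproximated E → limitSet E = X → critExp E ≤ upperBoxDim X :=
  upperBoxDim_eq_max_critExp_general X hX hXcl
end
end
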